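/- (Exactness of ERA-type realization from a rank factorization.) Let A ∈ ℝ^{n×n}, B ∈ ℝ^{n×m}, C ∈ ℝ^{p×n}, and s ≥ 2, and set h_k = C A^{k−1} B for 1 ≤ k ≤ 2s−1. Assume the depth-(s−1) observability matrix (block rows C, CA, …, CA^{s−2}) has rank n and the depth-s controllability matrix (block columns B, AB, …, A^{s−1}B) has rank n. Let H ∈ ℝ^{ps×ms} be the block Hankel matrix with (i,j)-th block h_{i+j−1}, and suppose H = O'·𝒞' where O' ∈ ℝ^{ps×n} has full column rank n and 𝒞' ∈ ℝ^{n×ms} has full row rank n. Let O'_f and O'_l be the first and last p(s−1) rows of O'. Then O'_f has full column rank, and the realization A' = (O'_fᵀO'_f)⁻¹O'_fᵀO'_l, B' = the first m columns of 𝒞', C' = the first p rows of O', reproduces all given Markov parameters: C' (A')^{k−1} B' = h_k for every 1 ≤ k ≤ 2s−1. -/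

import Mathlib

/-!
The true observability and controllability matrices factor the Hankel matrix as `H = O 𝒞`, so
`O' 𝒞' = O 𝒞` are two rank factorizations of `H` and differ by an invertible change of basis:
`O' = O U` and `U 𝒞' = 𝒞`. Reading off block rows and columns, `C' = C U`, `U B' = B`,
`O'_f = O_f U` and, by shift invariance of the observability matrix, `O'_l = O_f A U`, where
`O_f` is the depth-`(s-1)` observability matrix. It has full column rank, so the least-squares
solution is exact, `A' = U⁻¹ A U`. Thus `(C', A', B')` is similar to `(C, A, B)` and has the
same Markov parameters.
-/

open Matrix

/-- The block Hankel matrix of Markov parameters of depth `s` of a realization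
`(A,B,C)`: its `(i,j)`-th `p×m` block is `h_{i+j−1} = C A^{i+j−2} B`
(0-based: `C A^{i+j} B`). -/
def markovHankel {n m p : ℕ} (s : ℕ) (A : Matrix (Fin n) (Fin n) ℝ)
    (B : Matrix (Fin n) (Fin m) ℝ) (C : Matrix (Fin p) (Fin n) ℝ) :
    Matrix (Fin s × Fin p) (Fin s × Fin m) ℝ :=
  Matrix.of fun ia jb => (C * A ^ ((ia.1 : ℕ) + (jb.1 : ℕ)) * B) ia.2 jb.2

/-- The observability matrix of depth `t`: its `i`-th `p×n` block row is `C A^{i−1}`. -/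
def obsMatrix {n p : ℕ} (t : ℕ) (A : Matrix (Fin n) (Fin n) ℝ)
    (C : Matrix (Fin p) (Fin n) ℝ) : Matrix (Fin t × Fin p) (Fin n) ℝ :=
  Matrix.of fun ia x => (C * A ^ (ia.1 : ℕ)) ia.2 x

/-- The controllability matrix of depth `t`: its `j`-th `n×m` block column is `A^{j−1} B`. -/
def ctrlMatrix {n m : ℕ} (t : ℕ) (A : Matrix (Fin n) (Fin n) ℝ)
    (B : Matrix (Fin n) (Fin m) ℝ) : Matrix (Fin n) (Fin t × Fin m) ℝ :=
  Matrix.of fun x jb => (A ^ (jb.1 : ℕ) * B) x jb.2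

namespace Matrix

section Field

variable {K : Type*} [Field K] {m n : Type*} [Fintype m] [Fintype n] [DecidableEq n]

theorem exists_mul_eq_one_of_rank_eq_card_height {M : Matrix n m K}
    (h : M.rank = Fintype.card n) : ∃ R : Matrix m n K, M * R = 1 := by
  have hrange : LinearMap.range M.mulVecLin = ⊤ :=
    Submodule.eq_top_of_finrank_eq (by rw [← rank, h, Module.finrank_fintype_fun_eq_card])
  exact mulVec_surjective_iff_exists_right_inverse.mp (LinearMap.range_eq_top.mp hrange)

theorem exists_mul_eq_one_of_rank_eq_card_width {M : Matrix m n K}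
    (h : M.rank = Fintype.card n) : ∃ L : Matrix n m K, L * M = 1 := by
  obtain ⟨R, hR⟩ := exists_mul_eq_one_of_rank_eq_card_height (M := Mᵀ) (by rwa [rank_transpose])
  exact ⟨Rᵀ, by rw [← transpose_transpose M, ← transpose_mul, hR, transpose_one]⟩

theorem isUnit_det_of_rank_eq_card {M : Matrix n n K} (h : M.rank = Fintype.card n) :
    IsUnit M.det :=
  isUnit_det_of_right_inverse (exists_mul_eq_one_of_rank_eq_card_height h).choose_spec

theorem exists_isUnit_det_of_mul_eq_mul {l : Type*} [Fintype l] {O O' : Matrix m n K}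
    {X X' : Matrix n l K} (h : O' * X' = O * X) (hO' : O'.rank = Fintype.card n)
    (hX : X.rank = Fintype.card n) (hX' : X'.rank = Fintype.card n) :
    ∃ U : Matrix n n K, IsUnit U.det ∧ O' = O * U ∧ U * X' = X := by
  obtain ⟨L, hL⟩ := exists_mul_eq_one_of_rank_eq_card_width hO'
  obtain ⟨R, hR⟩ := exists_mul_eq_one_of_rank_eq_card_height hX
  set T := X' * R
  have hO'T : O' * T = O := by rw [← Matrix.mul_assoc, h, Matrix.mul_assoc, hR, Matrix.mul_one]
  have hTX : T * X = X' := calc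
    T * X = L * O' * (T * X) := by rw [hL, Matrix.one_mul]
    _ = L * (O * X) := by rw [← hO'T]; simp only [Matrix.mul_assoc]
    _ = X' := by rw [← h, ← Matrix.mul_assoc, hL, Matrix.one_mul]
  have hT : IsUnit T.det := by
    refine isUnit_det_of_rank_eq_card (le_antisymm (rank_le_card_width T) ?_)
    calc Fintype.card n = (T * X).rank := by rw [hTX, hX']
      _ ≤ T.rank := rank_mul_le_left T X
  refine ⟨T⁻¹, isUnit_nonsing_inv_det T hT, ?_, ?_⟩
  · rw [← hO'T, mul_nonsing_inv_cancel_right _ _ hT]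
  · rw [← hTX, nonsing_inv_mul_cancel_left _ _ hT]

end Field

theorem isUnit_det_transpose_mul_self_of_rank_eq_card {K m n : Type*} [Field K] [LinearOrder K]
    [IsStrictOrderedRing K] [Fintype m] [Fintype n] [DecidableEq n] {M : Matrix m n K}
    (h : M.rank = Fintype.card n) : IsUnit (Mᵀ * M).det :=
  isUnit_det_of_rank_eq_card (by rw [rank_transpose_mul_self, h])

theorem transpose_mul_self_inv_mul_transpose_mul_of_isUnit_det {R m n l : Type*} [CommRing R]
    [Fintype m] [Fintype n] [DecidableEq n] {P : Matrix m n R} {U : Matrix n n R}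
    (hP : IsUnit (Pᵀ * P).det) (hU : IsUnit U.det) (M : Matrix n l R) :
    ((P * U)ᵀ * (P * U))⁻¹ * (P * U)ᵀ * (P * M) = U⁻¹ * M := by
  have hG : IsUnit ((P * U)ᵀ * (P * U)).det := by
    have hG' : (P * U)ᵀ * (P * U) = Uᵀ * (Pᵀ * P) * U := by
      simp only [transpose_mul, Matrix.mul_assoc]
    rw [hG', det_mul, det_mul, det_transpose]
    exact (hU.mul hP).mul hU
  have hsol : (P * U)ᵀ * (P * U) * (U⁻¹ * M) = (P * U)ᵀ * (P * M) := by
    rw [Matrix.mul_assoc, Matrix.mul_assoc P, mul_nonsing_inv_cancel_left _ _ hU]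
  rw [Matrix.mul_assoc, ← hsol, nonsing_inv_mul_cancel_left _ _ hG]

theorem nonsing_inv_mul_mul_pow {R n : Type*} [CommRing R] [Fintype n] [DecidableEq n]
    {U : Matrix n n R} (hU : IsUnit U.det) (A : Matrix n n R) (k : ℕ) :
    (U⁻¹ * A * U) ^ k = U⁻¹ * A ^ k * U := by
  obtain ⟨u, rfl⟩ := (isUnit_iff_isUnit_det U).mpr hU
  rw [← coe_units_inv, Units.conj_pow']

theorem mul_mul_conj_pow_mul_eq {R l m n : Type*} [CommRing R] [Fintype n] [DecidableEq n]
    {U : Matrix n n R} (hU : IsUnit U.det) (A : Matrix n n R) {B B' : Matrix n m R}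
    (hB' : U * B' = B) (C : Matrix l n R) (k : ℕ) :
    C * U * (U⁻¹ * A * U) ^ k * B' = C * A ^ k * B := by
  rw [nonsing_inv_mul_mul_pow hU, ← hB']
  simp only [Matrix.mul_assoc, mul_nonsing_inv_cancel_left _ _ hU]

end Matrix

section StateSpace

variable {n m p : ℕ} (A : Matrix (Fin n) (Fin n) ℝ) (B : Matrix (Fin n) (Fin m) ℝ)
  (C : Matrix (Fin p) (Fin n) ℝ)

theorem obsMatrix_mul_ctrlMatrix (s : ℕ) :
    obsMatrix s A C * ctrlMatrix s A B = markovHankel s A B C := by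
  ext ia jb
  rw [markovHankel, of_apply, pow_add, ← Matrix.mul_assoc, Matrix.mul_assoc (C * _)]
  rfl

theorem obsMatrix_row (t : ℕ) (ia : Fin t × Fin p) :
    obsMatrix t A C ia = (C * A ^ (ia.1 : ℕ)) ia.2 :=
  rfl

theorem obsMatrix_mul_self_row (t : ℕ) (ia : Fin t × Fin p) :
    (obsMatrix t A C * A) ia = (C * A ^ ((ia.1 : ℕ) + 1)) ia.2 := by
  rw [pow_succ, ← Matrix.mul_assoc]
  rfl

end StateSpace

/-- **Exactness of the ERA/Ho–Kalman realization from a rank factorization.**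
If the Markov parameters `h_k = C A^{k−1} B` come from a realization whose
depth-`(s−1)` observability matrix and depth-`s` controllability matrix both
have rank `n`, and `H = O' 𝒞'` is any rank factorization of the depth-`s`
block Hankel matrix with `O'` of full column rank `n` and `𝒞'` of full row
rank `n`, then `O'_f` has full column rank and the realization
`A' = (O'_fᵀO'_f)⁻¹O'_fᵀO'_l`, `B' = 𝒞'[I_m; 0]`, `C' = [I_p, 0]O'`
reproduces all given Markov parameters: `C' A'^{k−1} B' = h_k`
for `1 ≤ k ≤ 2s−1`. -/
theorem era_exact_recovery {n m p : ℕ} (s : ℕ) (hs : 2 ≤ s)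
    (A : Matrix (Fin n) (Fin n) ℝ) (B : Matrix (Fin n) (Fin m) ℝ)
    (C : Matrix (Fin p) (Fin n) ℝ)
    (hobs : (obsMatrix (s - 1) A C).rank = n)
    (hctrl : (ctrlMatrix s A B).rank = n)
    (O' : Matrix (Fin s × Fin p) (Fin n) ℝ)
    (𝒞' : Matrix (Fin n) (Fin s × Fin m) ℝ)
    (hfact : markovHankel s A B C = O' * 𝒞')
    (hO'rank : O'.rank = n) (h𝒞'rank : 𝒞'.rank = n)
    (O'f O'l : Matrix (Fin (s - 1) × Fin p) (Fin n) ℝ)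
    (hO'f : ∀ ia x, O'f ia x
      = O' (⟨(ia.1 : ℕ), lt_of_lt_of_le ia.1.isLt (Nat.sub_le s 1)⟩, ia.2) x)
    (hO'l : ∀ ia x, O'l ia x
      = O' (⟨(ia.1 : ℕ) + 1, by have := ia.1.isLt; omega⟩, ia.2) x)
    (A' : Matrix (Fin n) (Fin n) ℝ) (hA' : A' = (O'fᵀ * O'f)⁻¹ * O'fᵀ * O'l)
    (B' : Matrix (Fin n) (Fin m) ℝ) (hB' : ∀ x b, B' x b = 𝒞' x (⟨0, by omega⟩, b))
    (C' : Matrix (Fin p) (Fin n) ℝ) (hC' : ∀ a x, C' a x = O' (⟨0, by omega⟩, a) x) :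
    O'f.rank = n ∧
    ∀ k, 1 ≤ k → k ≤ 2 * s - 1 → C' * A' ^ (k - 1) * B' = C * A ^ (k - 1) * B := by
  have hcard := (Fintype.card_fin n).symm
  obtain ⟨U, hU, hO'U, hU𝒞'⟩ := exists_isUnit_det_of_mul_eq_mul
    (hfact.symm.trans (obsMatrix_mul_ctrlMatrix A B C s).symm) (hO'rank.trans hcard)
    (hctrl.trans hcard) (h𝒞'rank.trans hcard)
  set P := obsMatrix (s - 1) A C
  have hO'f' : O'f = P * U := by
    ext ia x; rw [hO'f, hO'U]; rfl
  have hO'l' : O'l = P * A * U := by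
    ext ia x; rw [hO'l, hO'U, mul_apply', mul_apply', obsMatrix_mul_self_row]; rfl
  have hC'U : C' = C * U := by
    ext a x; rw [hC', hO'U, mul_apply', mul_apply', obsMatrix_row]; simp
  have hUB' : U * B' = B := by
    ext x b
    calc (U * B') x b = (U * 𝒞') x (⟨0, by omega⟩, b) := by simp only [mul_apply, hB']
      _ = B x b := by simp [hU𝒞', ctrlMatrix]
  have hA'U : A' = U⁻¹ * A * U := by
    rw [hA', hO'f', hO'l', Matrix.mul_assoc P,
      transpose_mul_self_inv_mul_transpose_mul_of_isUnit_det
        (isUnit_det_transpose_mul_self_of_rank_eq_card (hobs.trans hcard)) hU, Matrix.mul_assoc]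
  refine ⟨by rw [hO'f', rank_mul_eq_left_of_isUnit_det _ _ hU, hobs], fun k _ _ => ?_⟩
  rw [hC'U, hA'U, mul_mul_conj_pow_mul_eq hU A hUB' C]
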